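/- Interpolation: let A ∈ ℂ^{n×n}, z ∈ ℂ⁺, and let v be a unit right singular vector of A − zI corresponding to σ_min(A − zI). If V ∈ ℂ^{n×ℓ} has orthonormal columns and v ∈ Col(V), then σ_min(AV − zV) = σ_min(A − zI) and inf_{w∈ℂ⁺} σ_min(AV − wV) ≤ σ_min(A − zI). -/

import Mathlib

open Matrix

/-- Euclidean (ℓ²) norm of a finite complex vector. -/
noncomputable def enorm {ι : Type*} [Fintype ι] (v : ι → ℂ) : ℝ :=
  ‖(EuclideanSpace.equiv ι ℂ).symm v‖

/-- Smallest singular value of a (possibly rectangular) complex matrix,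
characterized as the infimum of ‖Mw‖₂ over unit vectors w. -/
noncomputable def sigmaMin {m l : Type*} [Fintype m] [Fintype l] (M : Matrix m l ℂ) : ℝ :=
  sInf {r : ℝ | ∃ w : l → ℂ, _root_.enorm w = 1 ∧ r = _root_.enorm (M.mulVec w)}

/-- Spectral norm of a complex matrix: supremum of ‖Mw‖₂ over unit vectors w. -/
noncomputable def specNorm {m l : Type*} [Fintype m] [Fintype l] (M : Matrix m l ℂ) : ℝ :=
  sSup {r : ℝ | ∃ w : l → ℂ, _root_.enorm w = 1 ∧ r = _root_.enorm (M.mulVec w)}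

/-- Distance to instability: inf over the closed right half-plane of σ_min(A − zI). -/
noncomputable def distInstab {n : ℕ} (A : Matrix (Fin n) (Fin n) ℂ) : ℝ :=
  sInf {r : ℝ | ∃ z : ℂ, 0 ≤ z.re ∧ r = sigmaMin (A - z • 1)}

/-- Reduced distance: inf over the closed right half-plane of σ_min(AV − zV). -/
noncomputable def redDist {n l : ℕ} (A : Matrix (Fin n) (Fin n) ℂ)
    (V : Matrix (Fin n) (Fin l) ℂ) : ℝ :=
  sInf {r : ℝ | ∃ z : ℂ, 0 ≤ z.re ∧ r = sigmaMin (A * V - z • V)}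

/-! Because `V` is an isometry, `c ↦ V c` maps unit vectors onto the unit vectors of `Col V`, so
`σ_min((A - zI)V)` is the infimum of `‖(A - zI)u‖` over a subset of the unit vectors `u`; it is
therefore at least `σ_min(A - zI)`, and equal to it once the subset contains the minimizer `v`.
Taking `w = z` in the infimum defining the reduced distance gives the second claim. -/

section SingularValues

variable {k m l : Type*} [Fintype k] [Fintype m] [Fintype l]

lemma enorm_eq_sqrt_re_star_dotProduct (u : m → ℂ) :
    _root_.enorm u = Real.sqrt ((star u ⬝ᵥ u).re) := by
  rw [_root_.enorm, EuclideanSpace.norm_eq]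
  congr 1
  simp [dotProduct, Complex.re_sum, ← Complex.normSq_eq_norm_sq,
    Complex.normSq_apply]

lemma enorm_mulVec_of_conjTranspose_mul_self [DecidableEq l] {V : Matrix m l ℂ}
    (hV : Vᴴ * V = 1) (w : l → ℂ) : _root_.enorm (V *ᵥ w) = _root_.enorm w := by
  rw [enorm_eq_sqrt_re_star_dotProduct, enorm_eq_sqrt_re_star_dotProduct, star_mulVec,
    dotProduct_mulVec, vecMul_vecMul, ← dotProduct_mulVec, hV, one_mulVec]

lemma sigmaMin_nonneg (M : Matrix m l ℂ) : 0 ≤ sigmaMin M :=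
  Real.sInf_nonneg fun _ ⟨_, _, hr⟩ => hr ▸ norm_nonneg _

lemma sigmaMin_le_enorm_mulVec (M : Matrix m l ℂ) {w : l → ℂ} (hw : _root_.enorm w = 1) :
    sigmaMin M ≤ _root_.enorm (M *ᵥ w) :=
  csInf_le ⟨0, fun _ ⟨_, _, hr⟩ => hr ▸ norm_nonneg _⟩ ⟨w, hw, rfl⟩

lemma sigmaMin_le_sigmaMin_mul [DecidableEq l] [Nonempty l] (M : Matrix k m ℂ)
    {V : Matrix m l ℂ} (hV : Vᴴ * V = 1) : sigmaMin M ≤ sigmaMin (M * V) := by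
  obtain ⟨i⟩ := ‹Nonempty l›
  have hunit : _root_.enorm (Pi.single i 1 : l → ℂ) = 1 := by
    simp [_root_.enorm]
  refine le_csInf ⟨_, Pi.single i 1, hunit, rfl⟩ ?_
  rintro r ⟨w, hw, rfl⟩
  rw [← mulVec_mulVec]
  exact sigmaMin_le_enorm_mulVec M ((enorm_mulVec_of_conjTranspose_mul_self hV w).trans hw)

lemma sigmaMin_mul_eq_of_minimizer_eq_mulVec [DecidableEq l] (M : Matrix k m ℂ)
    {V : Matrix m l ℂ} (hV : Vᴴ * V = 1) {c : l → ℂ} (hc : _root_.enorm (V *ᵥ c) = 1)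
    (hmin : _root_.enorm (M *ᵥ (V *ᵥ c)) = sigmaMin M) :
    sigmaMin (M * V) = sigmaMin M := by
  have hc1 : _root_.enorm c = 1 := (enorm_mulVec_of_conjTranspose_mul_self hV c).symm.trans hc
  have : Nonempty l := by
    by_contra hempty
    rw [not_nonempty_iff] at hempty
    simp [Subsingleton.elim c 0, _root_.enorm] at hc1
  refine le_antisymm ?_ (sigmaMin_le_sigmaMin_mul M hV)
  calc sigmaMin (M * V) ≤ _root_.enorm ((M * V) *ᵥ c) := sigmaMin_le_enorm_mulVec _ hc1
    _ = sigmaMin M := by rw [← mulVec_mulVec, hmin]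

end SingularValues

lemma redDist_le_sigmaMin {n l : ℕ} (A : Matrix (Fin n) (Fin n) ℂ)
    (V : Matrix (Fin n) (Fin l) ℂ) {z : ℂ} (hz : 0 ≤ z.re) :
    redDist A V ≤ sigmaMin (A * V - z • V) :=
  csInf_le ⟨0, fun _ ⟨_, _, hr⟩ => hr ▸ sigmaMin_nonneg _⟩ ⟨z, hz, rfl⟩

/-- interpolation: if a unit right singular vector v of A − zI
corresponding to σ_min(A − zI) lies in Col V, then σ_min(AV − zV) = σ_min(A − zI)
and the reduced distance is at most σ_min(A − zI). -/
theorem sigmaMin_interpolation (n l : ℕ) (A : Matrix (Fin n) (Fin n) ℂ) (z : ℂ)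
    (hz : 0 ≤ z.re) (V : Matrix (Fin n) (Fin l) ℂ) (hV : Vᴴ * V = 1)
    (v : Fin n → ℂ) (hv1 : _root_.enorm v = 1)
    (hvsv : _root_.enorm ((A - z • 1).mulVec v) = sigmaMin (A - z • 1))
    (hvcol : ∃ c : Fin l → ℂ, V.mulVec c = v) :
    sigmaMin (A * V - z • V) = sigmaMin (A - z • 1) ∧
    redDist A V ≤ sigmaMin (A - z • 1) := by
  obtain ⟨c, rfl⟩ := hvcol
  have hσ : sigmaMin (A * V - z • V) = sigmaMin (A - z • 1) := by
    rw [← sigmaMin_mul_eq_of_minimizer_eq_mulVec (A - z • 1) hV hv1 hvsv,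
      Matrix.sub_mul, Matrix.smul_mul, Matrix.one_mul]
  exact ⟨hσ, hσ ▸ redDist_le_sigmaMin A V hz⟩
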